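/- In an atom-free MVS M, for every m ∈ M* and every positive integer n there exists m' ∈ M* such that n·m' ⊴ m, where n·m' denotes the n-fold sum m' + ... + m'. -/

import Mathlib

universe u v w

structure MVS (M : Type u) where
  add : M → M → M
  e : M
  assoc : ∀ a b c : M, add (add a b) c = add a (add b c)
  add_e : ∀ a : M, add a e = a
  e_add : ∀ a : M, add e a = a
  eq_e_of_add_eq_e : ∀ a b : M, add a b = e → a = e ∧ b = e
  exists_common : ∀ a b : M, a ≠ e → b ≠ e →
    ∃ c, c ≠ e ∧ (∃ d, add c d = a) ∧ (∃ d, add c d = b)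
  nontrivial : ∃ a : M, a ≠ e

variable {M : Type u} {X : Type v}

/-- `a ⊴ b` iff there is `c` with `a + c = b`. -/
def MVS.le (S : MVS M) (a b : M) : Prop := ∃ c, S.add a c = b

/-- `a ◁ b` iff there is `c ≠ e` with `a + c = b`. -/
def MVS.lt (S : MVS M) (a b : M) : Prop := ∃ c, c ≠ S.e ∧ S.add a c = b

def MVS.Commutative (S : MVS M) : Prop := ∀ a b, S.add a b = S.add b a

/-- An MVS is atom-free if it is commutative and every `m ≠ e` admits `n ≠ e` with `n ◁ m`. -/
def MVS.AtomFree (S : MVS M) : Prop :=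
  S.Commutative ∧ ∀ m, m ≠ S.e → ∃ n, n ≠ S.e ∧ S.lt n m

/-- A quasimetric function: triangle inequality and `f x x = e`. -/
def IsQuasimetric (S : MVS M) (f : X → X → M) : Prop :=
  (∀ x y z, S.le (f x z) (S.add (f x y) (f y z))) ∧ ∀ x, f x x = S.e

/-- Open ball `B_f(x,m) = {y | f x y ◁ m}`. -/
def ball (S : MVS M) (f : X → X → M) (x : X) (m : M) : Set X := {y | S.lt (f x y) m}

/-- Closed ball `B̄_f(x,m) = {y | f x y ⊴ m}`. -/
def closedBall (S : MVS M) (f : X → X → M) (x : X) (m : M) : Set X := {y | S.le (f x y) m}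

/-- The topology induced by a quasimetric function: open balls form a neighbourhood base. -/
def qTopology (S : MVS M) (f : X → X → M) : TopologicalSpace X :=
  TopologicalSpace.mkOfNhds fun x => ⨅ m ∈ {m : M | m ≠ S.e}, Filter.principal (ball S f x m)

/-- Entourage `U_m = {(x,y) | f x y ⊴ m}`. -/
def ent (S : MVS M) (f : X → X → M) (m : M) : Set (X × X) := {p | S.le (f p.1 p.2) m}

/-- `qcomp A B = A ∘ B = {(x,z) | ∃ y, (x,y) ∈ B ∧ (y,z) ∈ A}`. -/
def qcomp (A B : Set (X × X)) : Set (X × X) := {p | ∃ y, (p.1, y) ∈ B ∧ (y, p.2) ∈ A}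

def IsQuasiUniformity (U : Set (Set (X × X))) : Prop :=
  U.Nonempty ∧
  (∀ u ∈ U, ∀ x : X, (x, x) ∈ u) ∧
  (∀ u ∈ U, ∀ v : Set (X × X), u ⊆ v → v ∈ U) ∧
  (∀ u ∈ U, ∀ v ∈ U, u ∩ v ∈ U) ∧
  (∀ u ∈ U, ∃ v ∈ U, qcomp v v ⊆ u)

def IsBaseOf (B U : Set (Set (X × X))) : Prop := B ⊆ U ∧ ∀ u ∈ U, ∃ b ∈ B, b ⊆ u

/-- `U + V` : the intersection of all entourages `U_n` containing `V ∘ U`. -/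
def addEnt (S : MVS M) (f : X → X → M) (A B : Set (X × X)) : Set (X × X) :=
  ⋂₀ {w | (∃ m, ent S f m = w) ∧ qcomp B A ⊆ w}

/-- The topology induced by a base of a quasiuniformity: sections `U[x]` form a
neighbourhood base. -/
def quTopology (B : Set (Set (X × X))) : TopologicalSpace X :=
  TopologicalSpace.mkOfNhds fun x => ⨅ u ∈ B, Filter.principal {y | (x, y) ∈ u}

/-- `n`-fold sum `m + ⋯ + m`. -/
def nfold (S : MVS M) : ℕ → M → M
  | 0, _ => S.e
  | Nat.succ n, m => S.add m (nfold S n m)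

/-!
Atom-freeness lets us halve: if `a ◁ m` with `a + c = m`, a common lower bound `d ≠ e` of `a` and
`c` satisfies `d + d ⊴ a + c = m`. Halving the witness for `(n+1)·a ⊴ m` gives
`(n+2)·d ⊴ (2n+2)·d = (n+1)·(d + d) ⊴ (n+1)·a ⊴ m`, so induction on `n` suffices.
-/

namespace MVS

variable (S : MVS M)

lemma add_add_add_comm (hc : S.Commutative) (a b c d : M) :
    S.add (S.add a b) (S.add c d) = S.add (S.add a c) (S.add b d) := by
  rw [S.assoc, ← S.assoc b c d, hc b c, S.assoc c b d, ← S.assoc]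

lemma le_trans {a b c : M} (hab : S.le a b) (hbc : S.le b c) : S.le a c := by
  obtain ⟨x, rfl⟩ := hab
  obtain ⟨y, rfl⟩ := hbc
  exact ⟨S.add x y, (S.assoc a x y).symm⟩

lemma add_le_add (hc : S.Commutative) {a b c d : M} (hab : S.le a b) (hcd : S.le c d) :
    S.le (S.add a c) (S.add b d) := by
  obtain ⟨x, rfl⟩ := hab
  obtain ⟨y, rfl⟩ := hcd
  exact ⟨S.add x y, S.add_add_add_comm hc a c x y⟩

lemma exists_add_self_le (hAF : S.AtomFree) {m : M} (hm : m ≠ S.e) :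
    ∃ d, d ≠ S.e ∧ S.le (S.add d d) m := by
  obtain ⟨a, ha, c, hc, rfl⟩ := hAF.2 m hm
  obtain ⟨d, hd, ⟨x, rfl⟩, ⟨y, rfl⟩⟩ := S.exists_common a c ha hc
  exact ⟨d, hd, S.add x y, S.add_add_add_comm hAF.1 d d x y⟩

end MVS

section nfold

variable (S : MVS M)

lemma nfold_one (a : M) : nfold S 1 a = a :=
  S.add_e a

lemma nfold_add (k n : ℕ) (a : M) :
    nfold S (k + n) a = S.add (nfold S k a) (nfold S n a) := by
  induction k with
  | zero => rw [Nat.zero_add, nfold, S.e_add]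
  | succ k ih => rw [Nat.succ_add, nfold, nfold, ih, S.assoc]

lemma nfold_le_nfold_of_le {k n : ℕ} (hkn : k ≤ n) (a : M) :
    S.le (nfold S k a) (nfold S n a) := by
  obtain ⟨j, rfl⟩ := Nat.exists_eq_add_of_le hkn
  exact ⟨nfold S j a, (nfold_add S k j a).symm⟩

lemma nfold_le_nfold (hc : S.Commutative) (n : ℕ) {a b : M} (hab : S.le a b) :
    S.le (nfold S n a) (nfold S n b) := by
  induction n with
  | zero => exact ⟨S.e, S.add_e S.e⟩
  | succ n ih => exact S.add_le_add hc hab ih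

lemma nfold_add_self (hc : S.Commutative) (n : ℕ) (a : M) :
    nfold S n (S.add a a) = nfold S (n + n) a := by
  rw [nfold_add]
  induction n with
  | zero => exact (S.e_add S.e).symm
  | succ n ih => rw [nfold, ih, S.add_add_add_comm hc]; rfl

lemma exists_nfold_succ_le (hAF : S.AtomFree) {m : M} (hm : m ≠ S.e) (n : ℕ) :
    ∃ m', m' ≠ S.e ∧ S.le (nfold S (n + 1) m') m := by
  induction n with
  | zero => exact ⟨m, hm, S.e, by rw [nfold_one, S.add_e]⟩
  | succ n ih =>
      obtain ⟨a, ha, hle⟩ := ih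
      obtain ⟨d, hd, hdd⟩ := S.exists_add_self_le hAF ha
      have hlen : n + 2 ≤ (n + 1) + (n + 1) := by omega
      refine ⟨d, hd, S.le_trans (nfold_le_nfold_of_le S hlen d) ?_⟩
      rw [← nfold_add_self S hAF.1]
      exact S.le_trans (nfold_le_nfold S hAF.1 (n + 1) hdd) hle

end nfold

theorem stmt_19 (S : MVS M) (hAF : S.AtomFree) :
    ∀ m : M, m ≠ S.e → ∀ n : ℕ, 0 < n → ∃ m', m' ≠ S.e ∧ S.le (nfold S n m') m := by
  intro m hm n hn
  obtain ⟨k, rfl⟩ := Nat.exists_eq_succ_of_ne_zero hn.ne'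
  exact exists_nfold_succ_le S hAF hm k
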